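/- arXiv:1908.02202 — 2 statements merged into one kernel-verified Lean document; each statement's English description precedes it below -/
import Mathlib

section
/- The category of lenses in a finite product category is a category: for objects given by pairs (c,x) of objects of C, morphisms (c,x) → (d,y) given by pairs (f : c → d, f# : c × y → x), identity on (c,x) given by (id_c, projection c × x → x), and composition of (f,f#) : (c,x) → (d,y) and (g,g#) : (d,y) → (e,z) given by (f ⨾ g, h) where h : c × z → x is (δ_c × z) ⨾ (c × f × z) ⨾ (c × g#) ⨾ f#, the category axioms (left identity, right identity, associativity) hold. -/
open CategoryTheory CategoryTheory.Limits

universe v u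
variable {C : Type u} [Category.{v} C] [HasFiniteProducts C]

/-- The put part of the identity lens on `(c,x)`: the projection `c ⨯ x ⟶ x`. -/
noncomputable def lensIdPut (c x : C) : c ⨯ x ⟶ x := prod.snd

/-- The put part of the composite of lenses `(f,f#) : (c,x) ⟶ (d,y)` and
`(g,g#) : (d,y) ⟶ (e,z)`, namely `(δ_c × z) ≫ (c × f × z) ≫ (c × g#) ≫ f#`
(with the associator inserted). -/
noncomputable def lensCompPut {c x d y z : C} (f : c ⟶ d) (f' : c ⨯ y ⟶ x)
    (g' : d ⨯ z ⟶ y) : c ⨯ z ⟶ x :=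
  prod.map (prod.lift (𝟙 c) (𝟙 c)) (𝟙 z) ≫ (prod.associator c c z).hom ≫
    prod.map (𝟙 c) (prod.map f (𝟙 z)) ≫ prod.map (𝟙 c) g' ≫ f'

/-- `lensCompPut` rewritten as a single `prod.lift`. -/
lemma lensCompPut_eq {c x d y z : C} (f : c ⟶ d) (f' : c ⨯ y ⟶ x)
    (g' : d ⨯ z ⟶ y) :
    lensCompPut f f' g' = prod.lift prod.fst (prod.map f (𝟙 z) ≫ g') ≫ f' := by
  simp only [lensCompPut, prod.associator_hom, ← Category.assoc, prod.comp_lift,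
    prod.map_map, prod.lift_map, Category.id_comp, Category.comp_id,
    prod.lift_fst, prod.lift_snd, prod.map_fst, prod.map_snd]
  congr 2
  congr 1
  apply Limits.prod.hom_ext <;> simp
  · erw [prod.lift_fst]
  · erw [prod.lift_snd]

/-- The category of lenses in a finite product category satisfies the category axioms:
left identity, right identity and associativity, on both the get and put parts. -/
theorem lens_fp_is_category :
    -- left identity
    (∀ {c x d y : C} (f : c ⟶ d) (f' : c ⨯ y ⟶ x),
      𝟙 c ≫ f = f ∧ lensCompPut (𝟙 c) (lensIdPut c x) f' = f') ∧
    -- right identity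
    (∀ {c x d y : C} (f : c ⟶ d) (f' : c ⨯ y ⟶ x),
      f ≫ 𝟙 d = f ∧ lensCompPut f f' (lensIdPut d y) = f') ∧
    -- associativity
    (∀ {c x d y e z e' w : C} (f : c ⟶ d) (f' : c ⨯ y ⟶ x)
      (g : d ⟶ e) (g' : d ⨯ z ⟶ y) (h : e ⟶ e') (h' : e ⨯ w ⟶ z),
      (f ≫ g) ≫ h = f ≫ (g ≫ h) ∧
      lensCompPut (f ≫ g) (lensCompPut f f' g') h' =
        lensCompPut f f' (lensCompPut g g' h')) := by
  refine ⟨fun f f' => ⟨Category.id_comp f, ?_⟩,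
    fun f f' => ⟨Category.comp_id f, ?_⟩,
    fun f f' g g' h h' => ⟨Category.assoc f g h, ?_⟩⟩
  · simp [lensCompPut_eq, lensIdPut]
    exact prod.lift_snd _ _
  · simp [lensCompPut_eq, lensIdPut]
  · simp only [lensCompPut_eq]
    rw [← Category.assoc]
    congr 1
    apply Limits.prod.hom_ext
    · simp
      erw [prod.lift_fst, prod.lift_fst, prod.lift_fst]
    · simp only [Category.assoc, prod.comp_lift, prod.lift_snd, prod.lift_fst_assoc]
      rw [← Category.assoc, ← Category.assoc]
      congr 1
      apply Limits.prod.hom_ext <;> simp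
end

section
/- The category of lenses in a symmetric monoidal category is a category: objects are pairs (c,x) with c a commutative comonoid in C and x an object of C; morphisms (c,x) → (d,y) are pairs (f, f#) with f a comonoid morphism c → d and f# : c ⊗ y → x; identity on (c,x) is (id_c, (ε_c ⊗ x) ⨾ λ); composition of (f,f#) and (g,g#) : (d,y) → (e,z) is (f ⨾ g, (δ_c ⊗ z) ⨾ (c ⊗ f ⊗ z) ⨾ (c ⊗ g#) ⨾ f#); these data satisfy unitality and associativity. -/
open CategoryTheory MonoidalCategory

universe v u
variable (C : Type u) [Category.{v} C] [MonoidalCategory C] [SymmetricCategory C]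

/-- A commutative comonoid in a symmetric monoidal category. -/
structure CComon where
  X : C
  counit : X ⟶ 𝟙_ C
  comul : X ⟶ X ⊗ X
  counit_law : comul ≫ (X ◁ counit) ≫ (ρ_ X).hom = 𝟙 X
  comm : comul ≫ (β_ X X).hom = comul
  coassoc : comul ≫ (comul ▷ X) ≫ (α_ X X X).hom = comul ≫ (X ◁ comul)

variable {C}

/-- The put part of the identity lens on `(c,x)`: `(ε_c ⊗ x) ≫ λ_x`. -/
def lensSMCIdPut (M : CComon C) (x : C) : M.X ⊗ x ⟶ x := (M.counit ▷ x) ≫ (λ_ x).hom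

/-- The put part of the composite of `(f,f#) : (c,x) ⟶ (d,y)` and `(g,g#) : (d,y) ⟶ (e,z)`:
`(δ_c ⊗ z) ≫ (c ⊗ f ⊗ z) ≫ (c ⊗ g#) ≫ f#` (with the associator inserted). -/
def lensSMCCompPut {M N : CComon C} {x y z : C} (f : M.X ⟶ N.X)
    (f' : M.X ⊗ y ⟶ x) (g' : N.X ⊗ z ⟶ y) : M.X ⊗ z ⟶ x :=
  (M.comul ▷ z) ≫ (α_ M.X M.X z).hom ≫ (M.X ◁ (f ▷ z)) ≫ (M.X ◁ g') ≫ f'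

/-- Left counit law, derived from the right one and cocommutativity. -/
lemma CComon.counit_law' (M : CComon C) :
    M.comul ≫ (M.counit ▷ M.X) ≫ (λ_ M.X).hom = 𝟙 M.X := by
  conv_lhs => rw [← M.comm]
  rw [Category.assoc, ← BraidedCategory.braiding_naturality_right_assoc,
    braiding_leftUnitor]
  simpa using M.counit_law

lemma lens_left_id {M : CComon C} {x y : C} (f' : M.X ⊗ y ⟶ x) :
    lensSMCCompPut (𝟙 M.X) (lensSMCIdPut M x) f' = f' := by
  simp only [lensSMCCompPut, lensSMCIdPut, id_whiskerRight, MonoidalCategory.whiskerLeft_id,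
    Category.id_comp]
  rw [whisker_exchange_assoc, leftUnitor_naturality, leftUnitor_tensor_hom_assoc,
    associator_inv_naturality_left_assoc, Iso.hom_inv_id_assoc,
    ← comp_whiskerRight_assoc, ← comp_whiskerRight_assoc, Category.assoc,
    M.counit_law', id_whiskerRight, Category.id_comp]

lemma lens_right_id {M N : CComon C} {x y : C} (f : M.X ⟶ N.X)
    (h1 : M.counit = f ≫ N.counit) (f' : M.X ⊗ y ⟶ x) :
    lensSMCCompPut f f' (lensSMCIdPut N y) = f' := by
  simp only [lensSMCCompPut, lensSMCIdPut, MonoidalCategory.whiskerLeft_comp,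
    Category.assoc]
  rw [← MonoidalCategory.whiskerLeft_comp_assoc, ← comp_whiskerRight, ← h1,
    ← associator_naturality_middle_assoc, triangle_assoc,
    ← comp_whiskerRight_assoc, ← comp_whiskerRight_assoc, Category.assoc,
    M.counit_law, id_whiskerRight, Category.id_comp]

lemma lens_assoc {M N O : CComon C} {x y z w : C}
    (f : M.X ⟶ N.X) (h2 : f ≫ N.comul = M.comul ≫ (f ⊗ₘ f))
    (g : N.X ⟶ O.X)
    (f' : M.X ⊗ y ⟶ x) (g' : N.X ⊗ z ⟶ y) (h' : O.X ⊗ w ⟶ z) :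
    lensSMCCompPut (f ≫ g) (lensSMCCompPut f f' g') h' =
      lensSMCCompPut f f' (lensSMCCompPut g g' h') := by
  have inner : M.comul ▷ w ≫ (α_ M.X M.X w).hom ≫ M.X ◁ ((f ≫ g) ▷ w) ≫ M.X ◁ h' ≫
      (f ▷ z) ≫ g' =
      f ▷ w ≫ N.comul ▷ w ≫ (α_ N.X N.X w).hom ≫ N.X ◁ (g ▷ w) ≫ N.X ◁ h' ≫ g' := by
    rw [whisker_exchange_assoc, whisker_exchange_assoc,
      ← associator_naturality_left_assoc, comp_whiskerRight,
      MonoidalCategory.whiskerLeft_comp_assoc,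
      ← associator_naturality_middle_assoc,
      ← comp_whiskerRight_assoc (f ▷ M.X) (N.X ◁ f) w,
      ← MonoidalCategory.tensorHom_def, ← comp_whiskerRight_assoc, ← h2, comp_whiskerRight_assoc]
  simp only [lensSMCCompPut]
  calc
    M.comul ▷ w ≫ (α_ M.X M.X w).hom ≫ M.X ◁ ((f ≫ g) ▷ w) ≫ M.X ◁ h' ≫
        M.comul ▷ z ≫ (α_ M.X M.X z).hom ≫ M.X ◁ (f ▷ z) ≫ M.X ◁ g' ≫ f'
      = M.comul ▷ w ≫ (M.comul ▷ M.X) ▷ w ≫ (α_ (M.X ⊗ M.X) M.X w).hom ≫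
        (α_ M.X M.X (M.X ⊗ w)).hom ≫ M.X ◁ (M.X ◁ ((f ≫ g) ▷ w)) ≫ M.X ◁ (M.X ◁ h') ≫
        M.X ◁ (f ▷ z) ≫ M.X ◁ g' ≫ f' := by
        rw [whisker_exchange_assoc, whisker_exchange_assoc,
          ← associator_naturality_left_assoc,
          associator_naturality_right_assoc, associator_naturality_right_assoc]
    _ = M.comul ▷ w ≫ (α_ M.X M.X w).hom ≫ M.X ◁ (M.comul ▷ w) ≫
        M.X ◁ (α_ M.X M.X w).hom ≫ M.X ◁ (M.X ◁ ((f ≫ g) ▷ w)) ≫ M.X ◁ (M.X ◁ h') ≫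
        M.X ◁ (f ▷ z) ≫ M.X ◁ g' ≫ f' := by
        rw [← pentagon_assoc, ← comp_whiskerRight_assoc, ← comp_whiskerRight_assoc,
          Category.assoc, M.coassoc, comp_whiskerRight_assoc,
          associator_naturality_middle_assoc]
    _ = M.comul ▷ w ≫ (α_ M.X M.X w).hom ≫
        M.X ◁ (M.comul ▷ w ≫ (α_ M.X M.X w).hom ≫ M.X ◁ ((f ≫ g) ▷ w) ≫ M.X ◁ h' ≫
          (f ▷ z) ≫ g') ≫ f' := by
        simp only [MonoidalCategory.whiskerLeft_comp, Category.assoc]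
    _ = _ := by
        rw [inner]
        simp only [MonoidalCategory.whiskerLeft_comp, Category.assoc]

/-- The category of lenses in a symmetric monoidal category is a category: the unit
and associativity laws hold for the identities and composites described above
(on both the get and the put parts), where the get parts are comonoid morphisms. -/
theorem lens_smc_is_category :
    -- left identity
    (∀ (M N : CComon C) (x y : C) (f : M.X ⟶ N.X)
      (_ : M.counit = f ≫ N.counit) (_ : f ≫ N.comul = M.comul ≫ (f ⊗ₘ f))
      (f' : M.X ⊗ y ⟶ x),
      𝟙 M.X ≫ f = f ∧ lensSMCCompPut (𝟙 M.X) (lensSMCIdPut M x) f' = f') ∧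
    -- right identity
    (∀ (M N : CComon C) (x y : C) (f : M.X ⟶ N.X)
      (_ : M.counit = f ≫ N.counit) (_ : f ≫ N.comul = M.comul ≫ (f ⊗ₘ f))
      (f' : M.X ⊗ y ⟶ x),
      f ≫ 𝟙 N.X = f ∧ lensSMCCompPut f f' (lensSMCIdPut N y) = f') ∧
    -- associativity
    (∀ (M N O : CComon C) (x y z w : C)
      (f : M.X ⟶ N.X) (_ : M.counit = f ≫ N.counit)
      (_ : f ≫ N.comul = M.comul ≫ (f ⊗ₘ f))
      (g : N.X ⟶ O.X) (_ : N.counit = g ≫ O.counit)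
      (_ : g ≫ O.comul = N.comul ≫ (g ⊗ₘ g))
      (f' : M.X ⊗ y ⟶ x) (g' : N.X ⊗ z ⟶ y) (h' : O.X ⊗ w ⟶ z),
      lensSMCCompPut (f ≫ g) (lensSMCCompPut f f' g') h' =
        lensSMCCompPut f f' (lensSMCCompPut g g' h')) := by
  refine ⟨fun M N x y f h1 h2 f' => ⟨Category.id_comp f, lens_left_id f'⟩,
    fun M N x y f h1 h2 f' => ⟨Category.comp_id f, lens_right_id f h1 f'⟩,
    fun M N O x y z w f hf1 hf2 g hg1 hg2 f' g' h' => lens_assoc f hf2 g f' g' h'⟩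
end
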